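/- Let G₁₀ be the 6-vertex graph with edges v₁v₂, v₁v₃, v₁v₄, v₂v₃, v₂v₅, v₃v₅, v₄v₆, and for 1 ≤ i ≤ (n−4)/2 let F_n(i) = G₁₀∘(1,1,1,1,i,n−4−i) with spectral radius ρᵢ. Then ρᵢ satisfies the system: (ρᵢ² − n + i + 3)(ρᵢ² − ρᵢ − 2i − 2) = 2, with ρᵢ² − n + i + 3 > 0 and ρᵢ² − ρᵢ − 2i − 2 > 0. -/

import Mathlib

attribute [local instance] Classical.propDecidable

/-- The spectral radius (largest eigenvalue) of a real symmetric matrix,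
as the supremum of its real spectrum. -/
noncomputable def specRad {V : Type*} [Fintype V] [DecidableEq V] (A : Matrix V V ℝ) : ℝ :=
  sSup (spectrum ℝ A)

/-- Multiplication of vertices: `G ∘ (n₁,…,n_k)`. -/
def blowup {k : ℕ} (G : SimpleGraph (Fin k)) (n : Fin k → ℕ) :
    SimpleGraph (Σ i, Fin (n i)) :=
  G.comap Sigma.fst

/-- The reduced graph `G₁₀` on `{v₁,…,v₆}` with edges
`v₁v₂, v₁v₃, v₁v₄, v₂v₃, v₂v₅, v₃v₅, v₄v₆` (0-indexed). -/
def G₁₀ : SimpleGraph (Fin 6) :=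
  SimpleGraph.fromEdgeSet
    {Sym2.mk 0 1, Sym2.mk 0 2, Sym2.mk 0 3, Sym2.mk 1 2,
      Sym2.mk 1 4, Sym2.mk 2 4, Sym2.mk 3 5}

/-
Eigenvectors of a blow-up `G ∘ s` (nonempty parts) for a nonzero eigenvalue are constant on the
parts, so its nonzero eigenvalues are those of the quotient system `ρ x_a = ∑_{b ~ a} s_b x_b`.
For `G₁₀`, eliminating variables turns this system into `ρ · x 0 · (F ρ · G ρ - 2) = 0`, where
`F ρ = ρ² - n + i + 3` and `G ρ = ρ² - ρ - 2i - 2`.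
The root `r` of `F · G = 2` beyond the zeros of both factors carries an explicit quotient
eigenvector, hence `r ≤ ρ`; then `F ρ, G ρ > 0`, which forces `x 0 ≠ 0` in a `ρ`-eigenvector,
so `ρ` solves the equation too.
-/

theorem exists_root_factors_nonneg_of_ge {α β : ℝ} (hα : 0 ≤ α) (hβ : 0 ≤ β) :
    ∃ x₀ : ℝ, 1 ≤ x₀ ∧ (x₀ ^ 2 - α) * (x₀ ^ 2 - x₀ - β) = 0 ∧
      ∀ x, x₀ ≤ x → 0 ≤ x ^ 2 - α ∧ 0 ≤ x ^ 2 - x - β := by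
  set a := √α
  set b := (1 + √(1 + 4 * β)) / 2
  have ha : a ^ 2 = α := Real.sq_sqrt hα
  have hd : √(1 + 4 * β) ^ 2 = 1 + 4 * β := Real.sq_sqrt (by linarith)
  have hd1 : 1 ≤ √(1 + 4 * β) := Real.one_le_sqrt.mpr (by linarith)
  have hb : b ^ 2 - b = β := by linear_combination hd / 4
  have hb1 : 1 ≤ b := by simp only [b]; linarith
  refine ⟨max a b, hb1.trans (le_max_right a b), ?_, fun x hx => ⟨?_, ?_⟩⟩
  · rcases max_choice a b with h | h <;> rw [h]
    · rw [ha, sub_self, zero_mul]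
    · rw [← hb]; ring
  · nlinarith [le_max_left a b, Real.sqrt_nonneg α]
  · nlinarith [le_max_right a b]

theorem exists_root_factors_pos_of_ge {α β c : ℝ} (hα : 0 ≤ α) (hβ : 0 ≤ β) (hc : 0 < c) :
    ∃ r : ℝ, 0 < r ∧ (r ^ 2 - α) * (r ^ 2 - r - β) = c ∧
      ∀ ρ, r ≤ ρ → 0 < ρ ^ 2 - α ∧ 0 < ρ ^ 2 - ρ - β := by
  obtain ⟨x₀, hx₀, hzero, hnonneg⟩ := exists_root_factors_nonneg_of_ge hα hβ
  set f : ℝ → ℝ := fun x => (x ^ 2 - α) * (x ^ 2 - x - β)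
  have hM : c ≤ f (x₀ + c + 1) := by
    obtain ⟨hF, hG⟩ := hnonneg x₀ le_rfl
    have hF' : c + 1 ≤ (x₀ + c + 1) ^ 2 - α := by nlinarith
    have hG' : 1 ≤ (x₀ + c + 1) ^ 2 - (x₀ + c + 1) - β := by nlinarith
    nlinarith
  obtain ⟨r, ⟨hx₀r, -⟩, hr⟩ := intermediate_value_Icc (by linarith : x₀ ≤ x₀ + c + 1)
    (f := f) (by fun_prop) ⟨hzero.trans_le hc.le, hM⟩
  obtain ⟨hF₀, hG₀⟩ := hnonneg r hx₀r
  have hF : 0 < r ^ 2 - α := hF₀.lt_of_ne fun h => by simp [f, ← h] at hr; linarith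
  have hG : 0 < r ^ 2 - r - β := hG₀.lt_of_ne fun h => by simp [f, ← h] at hr; linarith
  exact ⟨r, by linarith, hr, fun ρ hρ => ⟨by nlinarith, by nlinarith⟩⟩

open Matrix

theorem Matrix.mem_spectrum_iff_exists_mulVec_eq_smul {n K : Type*} [Fintype n] [DecidableEq n]
    [Field K] (A : Matrix n n K) (μ : K) :
    μ ∈ spectrum K A ↔ ∃ v ≠ 0, A *ᵥ v = μ • v := by
  simp only [← Matrix.spectrum_toLin', ← Module.End.hasEigenvalue_iff_mem_spectrum,
    Module.End.hasEigenvalue_iff, ne_eq, Submodule.eq_bot_iff, not_forall,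
    Module.End.mem_eigenspace_iff, toLin'_apply]
  tauto

section Blowup

variable {k : ℕ} (G : SimpleGraph (Fin k)) (s : Fin k → ℕ)

theorem blowup_adjMatrix_mulVec_apply (v : (Σ a, Fin (s a)) → ℝ) (u : Σ a, Fin (s a)) :
    ((blowup G s).adjMatrix ℝ *ᵥ v) u = (G.adjMatrix ℝ *ᵥ fun b => ∑ t, v ⟨b, t⟩) u.1 := by
  simp only [mulVec, dotProduct, ← Finset.univ_sigma_univ, Finset.sum_sigma, Finset.mul_sum]
  refine Finset.sum_congr rfl fun b _ => Finset.sum_congr rfl fun t _ => ?_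
  simp [SimpleGraph.adjMatrix, blowup]

theorem blowup_adjMatrix_mulVec_comp_fst (x : Fin k → ℝ) :
    (blowup G s).adjMatrix ℝ *ᵥ (x ∘ Sigma.fst) =
      (G.adjMatrix ℝ *ᵥ ((Nat.cast ∘ s) * x)) ∘ Sigma.fst := by
  ext u
  simp only [blowup_adjMatrix_mulVec_apply, Function.comp_apply, Finset.sum_const,
    Finset.card_univ, Fintype.card_fin, nsmul_eq_mul]
  rfl

variable {G s}

theorem mem_spectrum_blowup_adjMatrix_iff (hs : ∀ a, 0 < s a) {ρ : ℝ} (hρ : ρ ≠ 0) :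
    ρ ∈ spectrum ℝ ((blowup G s).adjMatrix ℝ) ↔
      ∃ x ≠ 0, G.adjMatrix ℝ *ᵥ ((Nat.cast ∘ s) * x) = ρ • x := by
  simp only [Matrix.mem_spectrum_iff_exists_mulVec_eq_smul]
  constructor
  · rintro ⟨w, hw, hwρ⟩
    -- `(A *ᵥ w) u` only depends on the part `u.1`, and `ρ ≠ 0`
    have hconst : ∀ u, w u = w ⟨u.1, ⟨0, hs u.1⟩⟩ := fun u => by
      apply mul_left_cancel₀ hρ
      simp only [← smul_eq_mul, ← Pi.smul_apply, ← hwρ, blowup_adjMatrix_mulVec_apply]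
    set x : Fin k → ℝ := fun a => w ⟨a, ⟨0, hs a⟩⟩
    have hwx : w = x ∘ Sigma.fst := funext hconst
    refine ⟨x, fun hx => hw (by rw [hwx, hx]; rfl), funext fun a => ?_⟩
    have := congrFun hwρ ⟨a, ⟨0, hs a⟩⟩
    rwa [hwx, blowup_adjMatrix_mulVec_comp_fst] at this
  · rintro ⟨x, hx, hxρ⟩
    refine ⟨x ∘ Sigma.fst, fun h => hx (funext fun a => congrFun h ⟨a, ⟨0, hs a⟩⟩), ?_⟩
    rw [blowup_adjMatrix_mulVec_comp_fst, hxρ]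
    rfl

end Blowup

theorem G₁₀_adjMatrix : G₁₀.adjMatrix ℝ =
    !![0, 1, 1, 1, 0, 0; 1, 0, 1, 0, 1, 0; 1, 1, 0, 0, 1, 0;
      1, 0, 0, 0, 0, 1; 0, 1, 1, 0, 0, 0; 0, 0, 0, 1, 0, 0] := by
  ext a b
  rw [SimpleGraph.adjMatrix_apply]
  fin_cases a <;> fin_cases b <;> simp [G₁₀]

theorem G₁₀_adjMatrix_mulVec_eq_smul_iff (p q ρ : ℝ) (x : Fin 6 → ℝ) :
    G₁₀.adjMatrix ℝ *ᵥ (![1, 1, 1, 1, p, q] * x) = ρ • x ↔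
      x 1 + x 2 + x 3 = ρ * x 0 ∧ x 0 + x 2 + p * x 4 = ρ * x 1 ∧
      x 0 + x 1 + p * x 4 = ρ * x 2 ∧ x 0 + q * x 5 = ρ * x 3 ∧
      x 1 + x 2 = ρ * x 4 ∧ x 3 = ρ * x 5 := by
  simp [G₁₀_adjMatrix, funext_iff, Fin.forall_fin_succ, dotProduct, Fin.sum_univ_six]

theorem G₁₀_exists_quotient_eigenvector {p q r : ℝ}
    (hroot : (r ^ 2 - q - 1) * (r ^ 2 - r - 2 * p - 2) = 2) (hne : r ^ 2 - r - 2 * p ≠ 0) :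
    ∃ x ≠ 0, G₁₀.adjMatrix ℝ *ᵥ (![1, 1, 1, 1, p, q] * x) = r • x := by
  set D₁ := r ^ 2 - r - 2 * p
  set D₂ := r ^ 2 - q
  -- normalised by `x 5 = D₁`; rows 5, 3, 1, 4 fix the other entries and row 0 is `hroot`
  refine ⟨![D₁ * D₂, r * D₂, r * D₂, r * D₁, 2 * D₂, D₁],
    fun h => hne (by simpa using congrFun h 5), ?_⟩
  rw [G₁₀_adjMatrix_mulVec_eq_smul_iff]
  simp only [Matrix.cons_val, D₁, D₂]
  exact ⟨by linear_combination (-r) * hroot, by ring, by ring, by ring, by ring, trivial⟩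

theorem G₁₀_quotient_root {p q ρ : ℝ} {x : Fin 6 → ℝ} (hx : x ≠ 0)
    (heig : G₁₀.adjMatrix ℝ *ᵥ (![1, 1, 1, 1, p, q] * x) = ρ • x) (hρ : 0 < ρ)
    (h₁ : 0 < ρ ^ 2 - ρ - 2 * p) (h₂ : 0 < ρ ^ 2 - q) :
    (ρ ^ 2 - q - 1) * (ρ ^ 2 - ρ - 2 * p - 2) = 2 := by
  obtain ⟨e₀, e₁, e₂, e₃, e₄, e₅⟩ := (G₁₀_adjMatrix_mulVec_eq_smul_iff p q ρ x).1 heig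
  have h₁₂ : x 1 = x 2 := by
    have : (x 1 - x 2) * (ρ + 1) = 0 := by linear_combination e₂ - e₁
    linarith [(mul_eq_zero.1 this).resolve_right (by linarith)]
  have hx₁ : (ρ ^ 2 - ρ - 2 * p) * x 1 = ρ * x 0 := by
    linear_combination -ρ * e₁ - p * e₄ - (ρ + p) * h₁₂
  have hx₅ : (ρ ^ 2 - q) * x 5 = x 0 := by linear_combination -ρ * e₅ - e₃
  have hx₀ : x 0 ≠ 0 := by
    intro h
    have h1 : x 1 = 0 := by simpa [h, h₁.ne'] using hx₁
    have h5 : x 5 = 0 := by simpa [h, h₂.ne'] using hx₅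
    have h4 : x 4 = 0 := by simpa [← h₁₂, h1, hρ.ne'] using e₄
    refine hx (funext fun a => ?_)
    fin_cases a <;> simp [h, h1, ← h₁₂, h4, h5, e₅]
  have key : ρ * x 0 * ((ρ ^ 2 - q - 1) * (ρ ^ 2 - ρ - 2 * p - 2) - 2) = 0 := by
    linear_combination (-(ρ ^ 2 - ρ - 2 * p) * (ρ ^ 2 - q)) * e₀
      - ((ρ ^ 2 - ρ - 2 * p) * (ρ ^ 2 - q)) * h₁₂ + (2 * (ρ ^ 2 - q)) * hx₁
      + ((ρ ^ 2 - ρ - 2 * p) * (ρ ^ 2 - q)) * e₅ + (ρ * (ρ ^ 2 - ρ - 2 * p)) * hx₅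
  have := (mul_eq_zero.1 key).resolve_left (mul_ne_zero hρ.ne' hx₀)
  linarith

section SpecRad

variable {V : Type*} [Fintype V] [DecidableEq V] {A : Matrix V V ℝ} {μ : ℝ}

theorem le_specRad (hμ : μ ∈ spectrum ℝ A) : μ ≤ specRad A :=
  le_csSup A.finite_spectrum.bddAbove hμ

theorem specRad_mem_spectrum (hμ : μ ∈ spectrum ℝ A) : specRad A ∈ spectrum ℝ A :=
  Set.Nonempty.csSup_mem ⟨μ, hμ⟩ A.finite_spectrum

end SpecRad

/-- For `1 ≤ i ≤ (n−4)/2`, the spectral radius `ρᵢ` of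
`F_n(i) = G₁₀∘(1,1,1,1,i,n−4−i)` satisfies
`(ρᵢ² − n + i + 3)(ρᵢ² − ρᵢ − 2i − 2) = 2` with both factors positive. -/
theorem stmt_19 (n i : ℕ) (hi₁ : 1 ≤ i) (hi₂ : i ≤ (n - 4) / 2) :
    (specRad ((blowup G₁₀ ![1, 1, 1, 1, i, n - 4 - i]).adjMatrix ℝ) ^ 2
        - (n : ℝ) + (i : ℝ) + 3) *
      (specRad ((blowup G₁₀ ![1, 1, 1, 1, i, n - 4 - i]).adjMatrix ℝ) ^ 2
        - specRad ((blowup G₁₀ ![1, 1, 1, 1, i, n - 4 - i]).adjMatrix ℝ)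
        - 2 * (i : ℝ) - 2) = 2 ∧
    0 < specRad ((blowup G₁₀ ![1, 1, 1, 1, i, n - 4 - i]).adjMatrix ℝ) ^ 2
        - (n : ℝ) + (i : ℝ) + 3 ∧
    0 < specRad ((blowup G₁₀ ![1, 1, 1, 1, i, n - 4 - i]).adjMatrix ℝ) ^ 2
        - specRad ((blowup G₁₀ ![1, 1, 1, 1, i, n - 4 - i]).adjMatrix ℝ)
        - 2 * (i : ℝ) - 2 := by
  set s : Fin 6 → ℕ := ![1, 1, 1, 1, i, n - 4 - i]
  set A := (blowup G₁₀ s).adjMatrix ℝ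
  have hs : ∀ a, 0 < s a := by intro a; fin_cases a <;> simp [s] <;> omega
  have hn : (2 * i + 4 : ℝ) ≤ n := by exact_mod_cast (by omega : 2 * i + 4 ≤ n)
  have hcast : Nat.cast ∘ s = ![1, 1, 1, 1, (i : ℝ), n - 4 - i] := by
    ext a
    fin_cases a <;> simp [s, Nat.sub_sub, Nat.cast_sub (by omega : 4 + i ≤ n), sub_sub]
  obtain ⟨r, hr, hroot, hfactors⟩ :=
    exists_root_factors_pos_of_ge (α := n - i - 3) (β := 2 * i + 2) (c := 2)
      (by linarith) (by positivity) two_pos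
  have hrA : r ∈ spectrum ℝ A := by
    refine (mem_spectrum_blowup_adjMatrix_iff hs hr.ne').2 ?_
    rw [hcast]
    exact G₁₀_exists_quotient_eigenvector (by linear_combination hroot)
      (by linarith [hfactors r le_rfl])
  have hrρ : r ≤ specRad A := le_specRad hrA
  obtain ⟨hF, hG⟩ := hfactors _ hrρ
  obtain ⟨x, hx, heig⟩ := (mem_spectrum_blowup_adjMatrix_iff hs
    (hr.trans_le hrρ).ne').1 (specRad_mem_spectrum hrA)
  rw [hcast] at heig
  have hρ := G₁₀_quotient_root hx heig (hr.trans_le hrρ) (by linarith) (by linarith)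
  exact ⟨by linear_combination hρ, by linarith, by linarith⟩
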